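/- arXiv:2203.07974 — 2 statements merged into one kernel-verified Lean document; each statement's English description precedes it below -/
import Mathlib

section
/- Let G be a topological group, Γ ⊆ G a dense subgroup, and γ ∈ Γ. If the conjugacy class of γ in Γ is finite, then the closure of the Γ-conjugacy class of γ equals the G-conjugacy class of γ, and this G-conjugacy class is finite. -/
open Set

theorem Continuous.image_eq_range_of_dense_of_isClosed {X Y : Type*} [TopologicalSpace X]
    [TopologicalSpace Y] {f : X → Y} (hf : Continuous f) {s : Set X} (hs : Dense s)
    (hclosed : IsClosed (f '' s)) : f '' s = range f :=
  (image_subset_range f s).antisymm (hclosed.closure_eq ▸ hf.range_subset_closure_image_dense hs)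

theorem closure_conjClass_of_dense_finite_general
    {G : Type*} [Group G] [TopologicalSpace G] [IsTopologicalGroup G] [T2Space G]
    (Γ : Subgroup G) (hdense : Dense (Γ : Set G)) (γ : G)
    (hfin : {x : G | ∃ h ∈ Γ, h * γ * h⁻¹ = x}.Finite) :
    closure {x : G | ∃ h ∈ Γ, h * γ * h⁻¹ = x} = {x : G | ∃ g : G, g * γ * g⁻¹ = x} ∧
      {x : G | ∃ g : G, g * γ * g⁻¹ = x}.Finite := by
  set conj : G → G := fun g ↦ g * γ * g⁻¹
  change closure (conj '' Γ) = range conj ∧ (range conj).Finite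
  have hclosed : IsClosed (conj '' Γ) := hfin.isClosed
  have hconj : conj '' Γ = range conj :=
    (by fun_prop : Continuous conj).image_eq_range_of_dense_of_isClosed hdense hclosed
  exact ⟨hclosed.closure_eq.trans hconj, hconj ▸ hfin⟩

/-- Let `Γ` be a dense subgroup of a Hausdorff topological group `G` and `γ ∈ Γ`. If the
conjugacy class of `γ` in `Γ` is finite, then the closure of the `Γ`-conjugacy class of `γ`
equals the `G`-conjugacy class of `γ`, and the latter is finite. -/
theorem closure_conjClass_of_dense_finite
    {G : Type*} [Group G] [TopologicalSpace G] [IsTopologicalGroup G] [T2Space G]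
    (Γ : Subgroup G) (hdense : Dense (Γ : Set G)) (γ : G) (hγ : γ ∈ Γ)
    (hfin : {x : G | ∃ h ∈ Γ, h * γ * h⁻¹ = x}.Finite) :
    closure {x : G | ∃ h ∈ Γ, h * γ * h⁻¹ = x} = {x : G | ∃ g : G, g * γ * g⁻¹ = x} ∧
      {x : G | ∃ g : G, g * γ * g⁻¹ = x}.Finite :=
  closure_conjClass_of_dense_finite_general Γ hdense γ hfin
end

section
/- Let G be a connected Hausdorff topological group with trivial center, and let Γ be a dense subgroup of G. Then Γ is an ICC group: every conjugacy class in Γ other than that of the identity is infinite. -/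
/-!
The conjugation map `g ↦ g γ g⁻¹` is continuous and sends the dense subgroup `Γ` into the
`Γ`-conjugacy class of `γ`. If that class were finite it would be closed, so the map would send
all of `G` into it; a continuous map with finite range out of a connected space is constant,
hence `γ` would commute with every element of `G`, i.e. be central.
-/

open Set

theorem Continuous.range_subsingleton_of_finite {X Y : Type*} [TopologicalSpace X]
    [TopologicalSpace Y] [PreconnectedSpace X] [T1Space Y] {f : X → Y} (hf : Continuous f)
    (hfin : (range f).Finite) : (range f).Subsingleton :=
  not_nontrivial_iff.mp fun h ↦ (isPreconnected_range hf).infinite_of_nontrivial h hfin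

theorem mem_center_of_finite_conjugates_of_dense {G : Type*} [Group G] [TopologicalSpace G]
    [ContinuousMul G] [ContinuousInv G] [T1Space G] [PreconnectedSpace G] {Γ : Set G}
    (hΓ : Dense Γ) {γ : G} (hfin : {x : G | ∃ h ∈ Γ, h * γ * h⁻¹ = x}.Finite) :
    γ ∈ Subgroup.center G := by
  set conj : G → G := fun g ↦ g * γ * g⁻¹
  have hconj : Continuous conj := by fun_prop
  have hrange_fin : (range conj).Finite :=
    hfin.subset <| (hconj.range_subset_closure_image_dense hΓ).trans hfin.isClosed.closure_subset
  have hconj_eq (g : G) : g * γ * g⁻¹ = γ :=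
    hconj.range_subsingleton_of_finite hrange_fin (mem_range_self g) ⟨1, by simp [conj]⟩
  refine Subgroup.mem_center_iff.mpr fun g ↦ ?_
  calc g * γ = g * γ * g⁻¹ * g := by group
    _ = γ * g := by rw [hconj_eq]

/-- A dense subgroup `Γ` of a connected Hausdorff topological group `G` with trivial center
is an ICC group: every `Γ`-conjugacy class other than that of the identity is infinite. -/
theorem dense_subgroup_of_centerfree_connected_is_ICC
    {G : Type*} [Group G] [TopologicalSpace G] [IsTopologicalGroup G] [T2Space G]
    [ConnectedSpace G] (hcenter : Subgroup.center G = ⊥)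
    (Γ : Subgroup G) (hdense : Dense (Γ : Set G)) :
    ∀ γ ∈ Γ, γ ≠ 1 → {x : G | ∃ h ∈ Γ, h * γ * h⁻¹ = x}.Infinite := by
  intro γ _ hγ hfin
  have hcentral := mem_center_of_finite_conjugates_of_dense hdense hfin
  rw [hcenter, Subgroup.mem_bot] at hcentral
  exact hγ hcentral
end
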